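/- arXiv:1312.7603 — 5 statements merged into one kernel-verified Lean document; each statement's English description precedes it below -/
import Mathlib

section
/- Let n ≥ 1, let t : Fin n → ℝ be strictly increasing timestamps, let I ⊆ ℝ be order-connected, and let s, φ : Fin n → Bool. For an index i, let T_i = {j : i ≤ j < n ∧ t j − t i ∈ I}. Then (s U_I φ)(i) = true if and only if T_i is nonempty and there exists an index j with first(i) ≤ j ≤ R_i and φ j = true, where first(i) = min T_i, last(i) = max T_i, seg(i) = min{j : i ≤ j < n ∧ s j = false} (when such j exists), and R_i = min(last(i), seg(i)) if some j ≥ i has s j = false, while R_i = last(i) otherwise. -/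
/-- Metric Until: `(p U_I q)(i)` holds iff there is `j` with `i ≤ j < n`,
`t j - t i ∈ I`, `q j = true`, and `p k = true` for all `i ≤ k < j`. -/
def MUntil {n : ℕ} (t : Fin n → ℝ) (I : Set ℝ) (p q : Fin n → Bool) (i : Fin n) : Prop :=
  ∃ j : Fin n, i ≤ j ∧ t j - t i ∈ I ∧ q j = true ∧
    ∀ k : Fin n, i ≤ k → k < j → p k = true

open Classical in
theorem stmt0 (n : ℕ) (hn : 1 ≤ n) (t : Fin n → ℝ) (ht : StrictMono t)
    (I : Set ℝ) (hI : I.OrdConnected) (s φ : Fin n → Bool) (i : Fin n) :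
    MUntil t I s φ i ↔
      ∃ hT : (Finset.univ.filter (fun j : Fin n => i ≤ j ∧ t j - t i ∈ I)).Nonempty,
        ∃ j : Fin n,
          (Finset.univ.filter (fun j : Fin n => i ≤ j ∧ t j - t i ∈ I)).min' hT ≤ j ∧
          (if hS : (Finset.univ.filter (fun j : Fin n => i ≤ j ∧ s j = false)).Nonempty then
              j ≤ min ((Finset.univ.filter (fun j : Fin n => i ≤ j ∧ t j - t i ∈ I)).max' hT)
                      ((Finset.univ.filter (fun j : Fin n => i ≤ j ∧ s j = false)).min' hS)
            else
              j ≤ (Finset.univ.filter (fun j : Fin n => i ≤ j ∧ t j - t i ∈ I)).max' hT) ∧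
          φ j = true := by
  set T := Finset.univ.filter (fun j : Fin n => i ≤ j ∧ t j - t i ∈ I) with hTdef
  set S := Finset.univ.filter (fun j : Fin n => i ≤ j ∧ s j = false) with hSdef
  constructor
  · rintro ⟨j, hij, htj, hφ, hall⟩
    have hjT : j ∈ T := by simp [hTdef, hij, htj]
    refine ⟨⟨j, hjT⟩, j, Finset.min'_le _ _ hjT, ?_, hφ⟩
    split_ifs with hS
    · refine le_min (Finset.le_max' _ _ hjT) ?_
      by_contra h
      push_neg at h
      have hm := (Finset.mem_filter.mp (Finset.min'_mem S hS)).2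
      exact absurd (hall _ hm.1 h) (by simp [hm.2])
    · exact Finset.le_max' _ _ hjT
  · rintro ⟨hT, j, hmin, hR, hφ⟩
    have hminT := Finset.mem_filter.mp (Finset.min'_mem T hT)
    have hmaxT := Finset.mem_filter.mp (Finset.max'_mem T hT)
    have hjmax : j ≤ T.max' hT := by
      split_ifs at hR with hS
      · exact hR.trans (min_le_left _ _)
      · exact hR
    have hij : i ≤ j := le_trans hminT.2.1 hmin
    have htj : t j - t i ∈ I :=
      hI.out hminT.2.2 hmaxT.2.2
        ⟨sub_le_sub_right (ht.monotone hmin) _, sub_le_sub_right (ht.monotone hjmax) _⟩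
    refine ⟨j, hij, htj, hφ, fun k hik hkj => ?_⟩
    by_contra hk
    have hkS : k ∈ S := by
      simp only [hSdef, Finset.mem_filter, Finset.mem_univ, true_and]
      exact ⟨hik, by simpa using hk⟩
    have hS : S.Nonempty := ⟨k, hkS⟩
    rw [dif_pos hS] at hR
    exact absurd (Finset.min'_le S k hkS)
      (not_le.mpr (lt_of_lt_of_le hkj (hR.trans (min_le_right _ _))))
end

section
/- Let n ≥ 1, let t : Fin n → ℝ be strictly increasing timestamps, let I ⊆ ℝ be order-connected, and let s, φ : Fin n → Bool. For an index i, let T_i = {j : i ≤ j < n ∧ t j − t i ∈ I}. Then (φ U_I s)(i) = true if and only if the set {j ∈ T_i : s j = true} is nonempty and, letting limit(i) denote its minimum, φ j = true for all j with i ≤ j < limit(i). -/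
open Classical in
theorem stmt1 (n : ℕ) (hn : 1 ≤ n) (t : Fin n → ℝ) (ht : StrictMono t)
    (I : Set ℝ) (hI : I.OrdConnected) (s φ : Fin n → Bool) (i : Fin n) :
    MUntil t I φ s i ↔
      ∃ hS : (Finset.univ.filter
          (fun j : Fin n => (i ≤ j ∧ t j - t i ∈ I) ∧ s j = true)).Nonempty,
        ∀ j : Fin n, i ≤ j →
          j < (Finset.univ.filter
              (fun j : Fin n => (i ≤ j ∧ t j - t i ∈ I) ∧ s j = true)).min' hS →
          φ j = true := by
  constructor
  · rintro ⟨j, hij, hIj, hsj, hφ⟩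
    have hjmem : j ∈ Finset.univ.filter
        (fun j : Fin n => (i ≤ j ∧ t j - t i ∈ I) ∧ s j = true) := by
      simp [hij, hIj, hsj]
    refine ⟨⟨j, hjmem⟩, fun k hik hklt => ?_⟩
    exact hφ k hik (lt_of_lt_of_le hklt (Finset.min'_le _ _ hjmem))
  · rintro ⟨hS, hφ⟩
    set m := (Finset.univ.filter
        (fun j : Fin n => (i ≤ j ∧ t j - t i ∈ I) ∧ s j = true)).min' hS with hm
    have hmmem := Finset.min'_mem _ hS
    rw [Finset.mem_filter] at hmmem
    exact ⟨m, hmmem.2.1.1, hmmem.2.1.2, hmmem.2.2, fun k hik hk => hφ k hik hk⟩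
end

section
/- Let n ≥ 1, let t : Fin n → ℝ be strictly increasing, and let I ⊆ ℝ be order-connected. For each index i let T_i = {j : i ≤ j < n ∧ t j − t i ∈ I}. If i ≤ j and both T_i and T_j are nonempty, then min T_i ≤ min T_j and max T_i ≤ max T_j. -/
open Classical in
theorem stmt2 (n : ℕ) (hn : 1 ≤ n) (t : Fin n → ℝ) (ht : StrictMono t)
    (I : Set ℝ) (hI : I.OrdConnected) (i j : Fin n) (hij : i ≤ j)
    (hTi : (Finset.univ.filter (fun k : Fin n => i ≤ k ∧ t k - t i ∈ I)).Nonempty)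
    (hTj : (Finset.univ.filter (fun k : Fin n => j ≤ k ∧ t k - t j ∈ I)).Nonempty) :
    (Finset.univ.filter (fun k : Fin n => i ≤ k ∧ t k - t i ∈ I)).min' hTi ≤
      (Finset.univ.filter (fun k : Fin n => j ≤ k ∧ t k - t j ∈ I)).min' hTj ∧
    (Finset.univ.filter (fun k : Fin n => i ≤ k ∧ t k - t i ∈ I)).max' hTi ≤
      (Finset.univ.filter (fun k : Fin n => j ≤ k ∧ t k - t j ∈ I)).max' hTj := by
  set Ti := Finset.univ.filter (fun k : Fin n => i ≤ k ∧ t k - t i ∈ I) with hTi_def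
  set Tj := Finset.univ.filter (fun k : Fin n => j ≤ k ∧ t k - t j ∈ I) with hTj_def
  have hmemTi : ∀ k, k ∈ Ti ↔ i ≤ k ∧ t k - t i ∈ I := by
    intro k; simp [hTi_def]
  have hmemTj : ∀ k, k ∈ Tj ↔ j ≤ k ∧ t k - t j ∈ I := by
    intro k; simp [hTj_def]
  have hti_tj : t i ≤ t j := ht.monotone hij
  constructor
  · -- min
    set m := Tj.min' hTj with hm
    obtain ⟨hjm, hmI⟩ := (hmemTj m).1 (Tj.min'_mem hTj)
    obtain ⟨x, hx⟩ := hTi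
    obtain ⟨hix, hxI⟩ := (hmemTi x).1 hx
    rcases le_total x m with h | h
    · exact le_trans (Finset.min'_le Ti x hx) h
    · -- m ≤ x, so t m - t i ∈ [t m - t j, t x - t i] ⊆ I
      have h1 : t m - t j ≤ t m - t i := by linarith
      have h2 : t m - t i ≤ t x - t i := by
        have := ht.monotone h; linarith
      have : t m - t i ∈ I := hI.out hmI hxI ⟨h1, h2⟩
      exact Finset.min'_le Ti m ((hmemTi m).2 ⟨le_trans hij hjm, this⟩)
  · -- max
    set M := Ti.max' hTi with hM
    set M' := Tj.max' hTj with hM'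
    obtain ⟨hiM, hMI⟩ := (hmemTi M).1 (Ti.max'_mem hTi)
    obtain ⟨hjM', hM'I⟩ := (hmemTj M').1 (Tj.max'_mem hTj)
    rcases le_total M M' with h | h
    · exact h
    · -- M' ≤ M; show M ∈ Tj
      have hjM : j ≤ M := le_trans hjM' h
      have h1 : t M' - t j ≤ t M - t j := by
        have := ht.monotone h; linarith
      have h2 : t M - t j ≤ t M - t i := by linarith
      have : t M - t j ∈ I := hI.out hM'I hMI ⟨h1, h2⟩
      exact Finset.le_max' Tj M ((hmemTj M).2 ⟨hjM, this⟩)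
end

section
/- Let n ≥ 1, let t : Fin n → ℝ be strictly increasing, let I ⊆ ℝ be order-connected, and let s : Fin n → Bool. For each index i let T_i = {j : i ≤ j < n ∧ t j − t i ∈ I} and let T'_i = {j ∈ T_i : s j = true}. If i ≤ j and both T'_i and T'_j are nonempty, then min T'_i ≤ min T'_j. -/
open Classical in
theorem stmt3 (n : ℕ) (hn : 1 ≤ n) (t : Fin n → ℝ) (ht : StrictMono t)
    (I : Set ℝ) (hI : I.OrdConnected) (s : Fin n → Bool) (i j : Fin n) (hij : i ≤ j)
    (hTi : (Finset.univ.filter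
        (fun k : Fin n => (i ≤ k ∧ t k - t i ∈ I) ∧ s k = true)).Nonempty)
    (hTj : (Finset.univ.filter
        (fun k : Fin n => (j ≤ k ∧ t k - t j ∈ I) ∧ s k = true)).Nonempty) :
    (Finset.univ.filter
        (fun k : Fin n => (i ≤ k ∧ t k - t i ∈ I) ∧ s k = true)).min' hTi ≤
      (Finset.univ.filter
        (fun k : Fin n => (j ≤ k ∧ t k - t j ∈ I) ∧ s k = true)).min' hTj := by
  set Ti := Finset.univ.filter
      (fun k : Fin n => (i ≤ k ∧ t k - t i ∈ I) ∧ s k = true) with hTidef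
  set Tj := Finset.univ.filter
      (fun k : Fin n => (j ≤ k ∧ t k - t j ∈ I) ∧ s k = true) with hTjdef
  by_contra h
  push_neg at h
  set mi := Ti.min' hTi
  set mj := Tj.min' hTj
  have hmi : mi ∈ Ti := Finset.min'_mem _ _
  have hmj : mj ∈ Tj := Finset.min'_mem _ _
  simp only [hTidef, Finset.mem_filter] at hmi
  simp only [hTjdef, Finset.mem_filter] at hmj
  have h1 : i ≤ mj := le_trans hij hmj.2.1.1
  have h2 : t mj - t j ≤ t mj - t i := by
    have := ht.monotone hij
    linarith
  have h3 : t mj - t i ≤ t mi - t i := by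
    have := ht.monotone (le_of_lt h)
    linarith
  have hmem : t mj - t i ∈ I :=
    hI.out hmj.2.1.2 hmi.2.1.2 ⟨h2, h3⟩
  have : mj ∈ Ti := by
    simp only [hTidef, Finset.mem_filter]
    exact ⟨Finset.mem_univ _, ⟨h1, hmem⟩, hmj.2.2⟩
  exact absurd (Finset.min'_le _ _ this) (not_le.mpr h)
end

section
/- Let n ≥ 1, let 1 ≤ l ≤ r ≤ n be indices, and let p : Fin n → Bool. Define φ(p) = χ_{l+1,r} S (χ_{l,r−1} U p). Then φ(p)(k) = p(l) ∨ p(l+1) ∨ ⋯ ∨ p(r) for every k with l ≤ k ≤ r, and φ(p)(k) = p(k) for every k outside [l,r]. -/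
/-- Untimed Until: `(p U q)(i) = true` iff there is `j` with `i ≤ j < n`,
`q j = true`, and `p k = true` for all `i ≤ k < j`. -/
def untilB {n : ℕ} (p q : Fin n → Bool) (i : Fin n) : Bool :=
  decide (∃ j : Fin n, i ≤ j ∧ q j = true ∧ ∀ k : Fin n, i ≤ k → k < j → p k = true)

/-- Since: `(p S q)(i) = true` iff there is `j ≤ i` with `q j = true`
and `p k = true` for all `j < k ≤ i`. -/
def sinceB {n : ℕ} (p q : Fin n → Bool) (i : Fin n) : Bool :=
  decide (∃ j : Fin n, j ≤ i ∧ q j = true ∧ ∀ k : Fin n, j < k → k ≤ i → p k = true)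

/-- `χ_{l,r}(k) = true` iff `l ≤ k ≤ r` (empty when `r < l`). -/
def chi {n : ℕ} (l r : ℤ) (k : Fin n) : Bool :=
  decide (l ≤ (k : ℤ) ∧ (k : ℤ) ≤ r)

theorem stmt6 (n : ℕ) (hn : 1 ≤ n) (l r : Fin n) (hlr : l ≤ r) (p : Fin n → Bool) :
    (∀ k : Fin n, l ≤ k → k ≤ r →
      (sinceB (chi ((l : ℤ) + 1) (r : ℤ))
          (untilB (chi (l : ℤ) ((r : ℤ) - 1)) p) k = true ↔
        ∃ k' : Fin n, l ≤ k' ∧ k' ≤ r ∧ p k' = true)) ∧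
    (∀ k : Fin n, k < l ∨ r < k →
      sinceB (chi ((l : ℤ) + 1) (r : ℤ))
          (untilB (chi (l : ℤ) ((r : ℤ) - 1)) p) k = p k) := by
  simp only [Fin.le_def, Fin.lt_def] at hlr ⊢
  constructor
  · intro k hlk hkr
    simp only [sinceB, untilB, chi, decide_eq_true_eq, Fin.le_def, Fin.lt_def]
    constructor
    · rintro ⟨j, hjk, ⟨j', hjj', hpj', hU⟩, hS⟩
      refine ⟨j', ?_, ?_, hpj'⟩
      · -- l ≤ j'
        have hjl : (l : ℕ) ≤ (j : ℕ) := by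
          by_contra h
          push_neg at h
          have := hS l h hlk
          omega
        omega
      · -- j' ≤ r
        by_contra h
        push_neg at h
        have hjr : (j : ℕ) ≤ (r : ℕ) := le_trans hjk hkr
        have := hU r hjr (by omega)
        omega
    · rintro ⟨k', hlk', hk'r, hp⟩
      refine ⟨l, hlk, ⟨k', hlk', hp, ?_⟩, ?_⟩
      · intro m hm1 hm2
        omega
      · intro m hm1 hm2
        omega
  · intro k hk
    suffices h : (sinceB (chi ((l : ℤ) + 1) (r : ℤ))
        (untilB (chi (l : ℤ) ((r : ℤ) - 1)) p) k = true ↔ p k = true) by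
      cases hp : p k <;> simp_all
    simp only [sinceB, untilB, chi, decide_eq_true_eq, Fin.le_def, Fin.lt_def]
    constructor
    · rintro ⟨j, hjk, ⟨j', hjj', hpj', hU⟩, hS⟩
      have hjeq : (j : ℕ) = (k : ℕ) := by
        by_contra h
        have := hS k (by omega) (le_refl _)
        omega
      have hj'eq : (j' : ℕ) = (j : ℕ) := by
        by_contra h
        have := hU j (le_refl _) (by omega)
        omega
      have : j' = k := by apply Fin.ext; omega
      rwa [this] at hpj'
    · intro hp
      exact ⟨k, le_refl _, ⟨k, le_refl _, hp, fun m h1 h2 => by omega⟩,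
        fun m h1 h2 => by omega⟩
end
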